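/- The generalized down-up algebra L(g, p₁, p₂, p₃) is isomorphic to the quantum generalized Heisenberg algebra H_{p₂}(p₁t - p₃, -g), via a map matching generators d ↦ y, u ↦ x, t ↦ t. -/

import Mathlib

/- STATEMENT 11: the generalized down-up algebra L(g, p₁, p₂, p₃) (generators
t = ι 0, u = ι 1, d = ι 2 with relations dt = p₁td - p₃d, tu = p₁ut - p₃u,
du - p₂ud + g(t) = 0) is isomorphic to the quantum generalized Heisenberg algebra
H_{p₂}(p₁t - p₃, -g) via d ↦ y, u ↦ x, t ↦ t. -/

noncomputable section

open FreeAlgebra Polynomial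

variable (K : Type) [Field K]

/-- Relations of `H_q(f,g)`. t = ι 0, x = ι 1, y = ι 2. -/
inductive qghRel (q : K) (f g : Polynomial K) :
    FreeAlgebra K (Fin 3) → FreeAlgebra K (Fin 3) → Prop
  | r1 : qghRel q f g (ι K (0 : Fin 3) * ι K (1 : Fin 3))
      (ι K (1 : Fin 3) * Polynomial.aeval (ι K (0 : Fin 3)) f)
  | r2 : qghRel q f g (ι K (2 : Fin 3) * ι K (0 : Fin 3))
      (Polynomial.aeval (ι K (0 : Fin 3)) f * ι K (2 : Fin 3))
  | r3 : qghRel q f g (ι K (2 : Fin 3) * ι K (1 : Fin 3) - q • (ι K (1 : Fin 3) * ι K (2 : Fin 3)))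
      (Polynomial.aeval (ι K (0 : Fin 3)) g)

/-- The quantum generalized Heisenberg algebra `H_q(f,g)`. -/
abbrev QGH (q : K) (f g : Polynomial K) := RingQuot (qghRel K q f g)

/-- Generators of `H_q(f,g)`. -/
def qghGen (q : K) (f g : Polynomial K) (i : Fin 3) : QGH K q f g :=
  RingQuot.mkAlgHom K (qghRel K q f g) (ι K i)

/-- Relations of the generalized down-up algebra `L(g, p₁, p₂, p₃)`.
t = ι 0, u = ι 1, d = ι 2. -/
inductive duRel (g : Polynomial K) (p₁ p₂ p₃ : K) :
    FreeAlgebra K (Fin 3) → FreeAlgebra K (Fin 3) → Prop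
  | r1 : duRel g p₁ p₂ p₃ (ι K (2 : Fin 3) * ι K (0 : Fin 3))
      (p₁ • (ι K (0 : Fin 3) * ι K (2 : Fin 3)) - p₃ • ι K (2 : Fin 3))
  | r2 : duRel g p₁ p₂ p₃ (ι K (0 : Fin 3) * ι K (1 : Fin 3))
      (p₁ • (ι K (1 : Fin 3) * ι K (0 : Fin 3)) - p₃ • ι K (1 : Fin 3))
  | r3 : duRel g p₁ p₂ p₃
      (ι K (2 : Fin 3) * ι K (1 : Fin 3) - p₂ • (ι K (1 : Fin 3) * ι K (2 : Fin 3)) +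
        Polynomial.aeval (ι K (0 : Fin 3)) g)
      0

/-- The generalized down-up algebra `L(g, p₁, p₂, p₃)`. -/
abbrev DownUp (g : Polynomial K) (p₁ p₂ p₃ : K) := RingQuot (duRel K g p₁ p₂ p₃)

/-- Generators of `L(g, p₁, p₂, p₃)`. -/
def duGen (g : Polynomial K) (p₁ p₂ p₃ : K) (i : Fin 3) : DownUp K g p₁ p₂ p₃ :=
  RingQuot.mkAlgHom K (duRel K g p₁ p₂ p₃) (ι K i)

/-
Both algebras are quotients of the free algebra on `t, u = x, d = y`, and their defining
relations are equivalent modulo each other: with `f = p₁t - p₃`, the relation `yt = f(t)y`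
expands to `dt = p₁td - p₃d`, `tx = xf(t)` to `tu = p₁ut - p₃u`, and `yx - p₂xy = -g(t)` is
`du - p₂ud + g(t) = 0`. Hence the identity of the free algebra descends to an isomorphism.
-/

namespace RingQuot

variable {S A : Type*} [CommSemiring S] [Semiring A] [Algebra S A] {r s : A → A → Prop}

def algEquivOfRelRespects
    (hrs : ∀ ⦃a b⦄, r a b → mkAlgHom S s a = mkAlgHom S s b)
    (hsr : ∀ ⦃a b⦄, s a b → mkAlgHom S r a = mkAlgHom S r b) :
    RingQuot r ≃ₐ[S] RingQuot s :=
  AlgEquiv.ofAlgHom (liftAlgHom S ⟨mkAlgHom S s, hrs⟩) (liftAlgHom S ⟨mkAlgHom S r, hsr⟩)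
    (by ext; simp [liftAlgHom_mkAlgHom_apply]) (by ext; simp [liftAlgHom_mkAlgHom_apply])

@[simp]
theorem algEquivOfRelRespects_mkAlgHom
    (hrs : ∀ ⦃a b⦄, r a b → mkAlgHom S s a = mkAlgHom S s b)
    (hsr : ∀ ⦃a b⦄, s a b → mkAlgHom S r a = mkAlgHom S r b) (a : A) :
    algEquivOfRelRespects hrs hsr (mkAlgHom S r a) = mkAlgHom S s a := by
  simp [algEquivOfRelRespects]

end RingQuot

section LinearPolynomial

variable {R A : Type*} [CommRing R] [Ring A] [Algebra R A]

theorem aeval_linear_mul (p₁ p₃ : R) (t d : A) :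
    aeval t (C p₁ * X - C p₃) * d = p₁ • (t * d) - p₃ • d := by
  simp [sub_mul, ← Algebra.smul_def]

theorem mul_aeval_linear (p₁ p₃ : R) (t u : A) :
    u * aeval t (C p₁ * X - C p₃) = p₁ • (u * t) - p₃ • u := by
  simp [mul_sub, Algebra.smul_def, Algebra.commutes, mul_assoc]

end LinearPolynomial

section DownUpHeisenberg

variable (g : Polynomial K) (p₁ p₂ p₃ : K)

theorem mkAlgHom_qghRel_of_duRel ⦃a b : FreeAlgebra K (Fin 3)⦄ (h : duRel K g p₁ p₂ p₃ a b) :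
    RingQuot.mkAlgHom K (qghRel K p₂ (C p₁ * X - C p₃) (-g)) a =
      RingQuot.mkAlgHom K (qghRel K p₂ (C p₁ * X - C p₃) (-g)) b := by
  cases h with
  | r1 =>
    rw [← aeval_linear_mul]
    exact RingQuot.mkAlgHom_rel K qghRel.r2
  | r2 =>
    rw [← mul_aeval_linear]
    exact RingQuot.mkAlgHom_rel K qghRel.r1
  | r3 =>
    rw [map_add, RingQuot.mkAlgHom_rel K qghRel.r3, map_neg, map_neg, neg_add_cancel, map_zero]

theorem mkAlgHom_duRel_of_qghRel ⦃a b : FreeAlgebra K (Fin 3)⦄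
    (h : qghRel K p₂ (C p₁ * X - C p₃) (-g) a b) :
    RingQuot.mkAlgHom K (duRel K g p₁ p₂ p₃) a = RingQuot.mkAlgHom K (duRel K g p₁ p₂ p₃) b := by
  cases h with
  | r1 =>
    rw [mul_aeval_linear]
    exact RingQuot.mkAlgHom_rel K duRel.r2
  | r2 =>
    rw [aeval_linear_mul]
    exact RingQuot.mkAlgHom_rel K duRel.r1
  | r3 =>
    rw [map_neg, map_neg, ← add_eq_zero_iff_eq_neg, ← map_add, RingQuot.mkAlgHom_rel K duRel.r3,
      map_zero]

end DownUpHeisenberg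

theorem stmt11 (g : Polynomial K) (p₁ p₂ p₃ : K) :
    ∃ φ : DownUp K g p₁ p₂ p₃ ≃ₐ[K] QGH K p₂ (C p₁ * X - C p₃) (-g),
      φ (duGen K g p₁ p₂ p₃ 2) = qghGen K p₂ (C p₁ * X - C p₃) (-g) 2 ∧
      φ (duGen K g p₁ p₂ p₃ 1) = qghGen K p₂ (C p₁ * X - C p₃) (-g) 1 ∧
      φ (duGen K g p₁ p₂ p₃ 0) = qghGen K p₂ (C p₁ * X - C p₃) (-g) 0 := by
  refine ⟨RingQuot.algEquivOfRelRespects (mkAlgHom_qghRel_of_duRel K g p₁ p₂ p₃)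
    (mkAlgHom_duRel_of_qghRel K g p₁ p₂ p₃), ?_, ?_, ?_⟩ <;>
  simp [duGen, qghGen]

end
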